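/- arXiv:2603.12371 — 3 statements merged into one kernel-verified Lean document; each statement's English description precedes it below -/
import Mathlib

section
/- Let n ≥ 1, work in Euclidean space ℝⁿ with Lebesgue measure, and let ν_n denote the volume of the unit ball in ℝⁿ. Let 0 < ε < r, and let V ⊆ ℝⁿ be a measurable set with 0 < vol(V) < ∞ and diam(V) ≤ 2ε. For f ∈ L²(ℝⁿ) set a = vol(V)⁻¹ ∫_V f dx. Then ∫_V ( f(x) − a )² dx ≤ ( 2 / ( ν_n · (r − ε)ⁿ ) ) · ∫_V ∫_{B_r(x)} ( f(y) − f(x) )² dy dx, where B_r(x) denotes the open ball of radius r centered at x. -/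
set_option maxHeartbeats 1000000
open MeasureTheory Metric

theorem poincare_aux (n : ℕ) (hn : 1 ≤ n) (ε r : ℝ)
    (hε : 0 < ε) (hεr : ε < r)
    (V : Set (EuclideanSpace ℝ (Fin n))) (hV : MeasurableSet V)
    (hVpos : 0 < volume V) (hVfin : volume V < ⊤)
    (hdiam : EMetric.diam V ≤ ENNReal.ofReal (2 * ε))
    (f : EuclideanSpace ℝ (Fin n) → ℝ) (hf : MemLp f 2 volume)
    (hfm : StronglyMeasurable f) :
    ∫ x in V, (f x - (volume V).toReal⁻¹ * ∫ y in V, f y) ^ 2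
      ≤ (2 / ((volume (Metric.ball (0 : EuclideanSpace ℝ (Fin n)) 1)).toReal * (r - ε) ^ n))
          * ∫ x in V, ∫ y in Metric.ball x r, (f y - f x) ^ 2 := by
  haveI : Nonempty (Fin n) := ⟨⟨0, hn⟩⟩
  haveI : Nontrivial (EuclideanSpace ℝ (Fin n)) := by
    apply Module.nontrivial_of_finrank_pos (R := ℝ)
    rw [finrank_euclideanSpace_fin]; omega
  set ν : ℝ := (volume (Metric.ball (0 : EuclideanSpace ℝ (Fin n)) 1)).toReal with hνdef
  have hν : 0 < ν := ENNReal.toReal_pos (measure_ball_pos _ _ one_pos).ne' measure_ball_lt_top.ne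
  have hrε : 0 < r - ε := by linarith
  set c : ℝ := ν * (r - ε) ^ n with hcdef
  have hc : 0 < c := mul_pos hν (pow_pos hrε n)
  set M : ℝ := (volume V).toReal with hMdef
  have hM : 0 < M := ENNReal.toReal_pos hVpos.ne' hVfin.ne
  haveI : Fact (volume V < ⊤) := ⟨hVfin⟩
  -- integrability basics
  have hf2 : Integrable (fun x => f x ^ 2) volume := hf.integrable_sq
  have hfint : ∀ (B : Set (EuclideanSpace ℝ (Fin n))), volume B < ⊤ → IntegrableOn f B volume := by
    intro B hB
    haveI : Fact (volume B < ⊤) := ⟨hB⟩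
    exact ((hf.restrict B).integrable one_le_two)
  have hfV : IntegrableOn f V volume := hfint V hVfin
  have hf2V : IntegrableOn (fun x => f x ^ 2) V volume := hf2.integrableOn
  have hIB : ∀ (w : EuclideanSpace ℝ (Fin n)) (B : Set (EuclideanSpace ℝ (Fin n))), volume B < ⊤ →
      IntegrableOn (fun z => (f z - f w) ^ 2) B volume := by
    intro w B hB
    have : (fun z => (f z - f w) ^ 2) = fun z => f z ^ 2 - 2 * f w * f z + f w ^ 2 := by
      funext z; ring
    rw [this]
    exact ((hf2.integrableOn).sub ((hfint B hB).const_mul _)).add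
      (integrableOn_const hB.ne)
  set S : ℝ := ∫ y in V, f y with hSdef
  set Q : ℝ := ∫ y in V, f y ^ 2 with hQdef
  set g : EuclideanSpace ℝ (Fin n) → ℝ := fun x => ∫ y in Metric.ball x r, (f y - f x) ^ 2 with hgdef
  have hgnn : ∀ x, 0 ≤ g x := fun x => setIntegral_nonneg measurableSet_ball
    (fun y _ => sq_nonneg _)
  -- measurability of g
  have hgsm : StronglyMeasurable g := by
    have hFm : StronglyMeasurable (fun p : EuclideanSpace ℝ (Fin n) × EuclideanSpace ℝ (Fin n) =>
        Set.indicator {p : EuclideanSpace ℝ (Fin n) × EuclideanSpace ℝ (Fin n) | dist p.2 p.1 < r}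
          (fun p => (f p.2 - f p.1) ^ 2) p) := by
      apply StronglyMeasurable.indicator
      · exact (((hfm.measurable.comp measurable_snd).sub
          (hfm.measurable.comp measurable_fst)).pow_const 2).stronglyMeasurable
      · exact measurableSet_lt (measurable_dist.comp (measurable_snd.prodMk measurable_fst))
          measurable_const
    have heq : g = fun x => ∫ y, Set.indicator
        {p : EuclideanSpace ℝ (Fin n) × EuclideanSpace ℝ (Fin n) | dist p.2 p.1 < r}
          (fun p => (f p.2 - f p.1) ^ 2) (x, y) := by
      funext x
      rw [hgdef]
      simp only
      rw [← integral_indicator measurableSet_ball]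
      refine integral_congr_ae (Filter.Eventually.of_forall fun y => ?_)
      by_cases h : dist y x < r <;> simp [Set.indicator, Metric.mem_ball, h]
    rw [heq]
    exact hFm.integral_prod_right' (ν := (volume : Measure (EuclideanSpace ℝ (Fin n))))
  -- integrable bound for g
  have hgbd : ∀ x, g x ≤ 2 * (∫ y, f y ^ 2)
      + 2 * (volume (Metric.ball (0 : EuclideanSpace ℝ (Fin n)) r)).toReal * f x ^ 2 := by
    intro x
    have h1 : g x ≤ ∫ y in Metric.ball x r, (2 * f y ^ 2 + 2 * f x ^ 2) := by
      apply setIntegral_mono_on (hIB x _ measure_ball_lt_top)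
      · exact ((hf2.integrableOn).const_mul 2).add (integrableOn_const measure_ball_lt_top.ne)
      · exact measurableSet_ball
      · intro y _; nlinarith [sq_nonneg (f y + f x)]
    have h2 : ∫ y in Metric.ball x r, (2 * f y ^ 2 + 2 * f x ^ 2)
        = 2 * (∫ y in Metric.ball x r, f y ^ 2) + (volume (Metric.ball x r)).toReal * (2 * f x ^ 2) := by
      rw [integral_add ((hf2.integrableOn).const_mul 2) (integrableOn_const measure_ball_lt_top.ne),
        integral_const_mul, setIntegral_const, measureReal_def, smul_eq_mul]
    have h3 : ∫ y in Metric.ball x r, f y ^ 2 ≤ ∫ y, f y ^ 2 :=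
      setIntegral_le_integral hf2 (Filter.Eventually.of_forall (fun y => sq_nonneg _))
    have h4 : volume (Metric.ball x r) = volume (Metric.ball (0 : EuclideanSpace ℝ (Fin n)) r) :=
      Measure.addHaar_ball_center volume x r
    rw [h4] at h2
    linarith
  have hgV : IntegrableOn g V volume := by
    apply Integrable.mono'
      ((integrable_const (2 * (∫ y, f y ^ 2))).add
        ((hf2V.const_mul (2 * (volume (Metric.ball (0 : EuclideanSpace ℝ (Fin n)) r)).toReal))))
      (hgsm.aestronglyMeasurable.restrict)
    refine Filter.Eventually.of_forall (fun x => ?_)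
    rw [Real.norm_eq_abs, abs_of_nonneg (hgnn x)]
    exact hgbd x
  set EG : ℝ := ∫ x in V, g x with hEGdef
  have iQ : IntegrableOn (fun _ : EuclideanSpace ℝ (Fin n) => Q) V volume :=
    integrableOn_const hVfin.ne
  -- key pointwise inequality
  have key : ∀ x ∈ V, ∀ y ∈ V, (f x - f y) ^ 2 ≤ 2 / c * (g x + g y) := by
    intro x hx y hy
    have hxy : dist x y ≤ 2 * ε := by
      have h1 : edist x y ≤ ENNReal.ofReal (2 * ε) :=
        le_trans (EMetric.edist_le_diam_of_mem hx hy) hdiam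
      rw [edist_dist] at h1
      exact (ENNReal.ofReal_le_ofReal_iff (by positivity)).1 h1
    set m := midpoint ℝ x y with hm
    have hnorm2 : ‖(2 : ℝ)‖ = 2 := by norm_num
    have hmx : dist m x ≤ ε := by
      have h2 : dist m x = ‖(2:ℝ)‖⁻¹ * dist x y := dist_midpoint_left x y
      rw [h2, hnorm2]; linarith
    have hmy : dist m y ≤ ε := by
      have h2 : dist m y = ‖(2:ℝ)‖⁻¹ * dist x y := dist_midpoint_right x y
      rw [h2, hnorm2]; linarith
    have hsub : Metric.ball m (r - ε) ⊆ Metric.ball x r ∩ Metric.ball y r := by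
      intro z hz
      rw [Metric.mem_ball] at hz
      constructor <;> rw [Metric.mem_ball]
      · calc dist z x ≤ dist z m + dist m x := dist_triangle _ _ _
          _ < (r - ε) + ε := by linarith
          _ = r := by ring
      · calc dist z y ≤ dist z m + dist m y := dist_triangle _ _ _
          _ < (r - ε) + ε := by linarith
          _ = r := by ring
    set B := Metric.ball x r ∩ Metric.ball y r with hB
    have hBm : MeasurableSet B := measurableSet_ball.inter measurableSet_ball
    have hBfin : volume B < ⊤ :=
      lt_of_le_of_lt (measure_mono Set.inter_subset_left) measure_ball_lt_top
    have hcB : c ≤ (volume B).toReal := by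
      have h1 : volume (Metric.ball m (r - ε))
          = ENNReal.ofReal ((r - ε) ^ n) * volume (Metric.ball (0 : EuclideanSpace ℝ (Fin n)) 1) := by
        rw [Measure.addHaar_ball volume m hrε.le, finrank_euclideanSpace_fin]
      have h2 : volume (Metric.ball m (r - ε)) ≤ volume B := measure_mono hsub
      have h3 := ENNReal.toReal_mono hBfin.ne h2
      rw [h1, ENNReal.toReal_mul, ENNReal.toReal_ofReal (by positivity)] at h3
      rw [hcdef, mul_comm]
      exact h3
    have i2x : IntegrableOn (fun z => 2 * (f z - f x) ^ 2) B volume := (hIB x B hBfin).const_mul 2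
    have i2y : IntegrableOn (fun z => 2 * (f z - f y) ^ 2) B volume := (hIB y B hBfin).const_mul 2
    have i2xy : IntegrableOn (fun z => 2 * (f z - f x) ^ 2 + 2 * (f z - f y) ^ 2) B volume :=
      i2x.add i2y
    have hkey2 : (f x - f y) ^ 2 * (volume B).toReal ≤ 2 * (g x + g y) := by
      have e1 : (f x - f y) ^ 2 * (volume B).toReal = ∫ _ in B, (f x - f y) ^ 2 := by
        rw [setIntegral_const, measureReal_def, smul_eq_mul, mul_comm]
      have e2 : (∫ _ in B, (f x - f y) ^ 2)
          ≤ ∫ z in B, (2 * (f z - f x) ^ 2 + 2 * (f z - f y) ^ 2) := by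
        apply setIntegral_mono_on (integrableOn_const hBfin.ne) i2xy hBm
        intro z _
        nlinarith [sq_nonneg (2 * f z - f x - f y)]
      have e3 : (∫ z in B, (2 * (f z - f x) ^ 2 + 2 * (f z - f y) ^ 2))
          = 2 * (∫ z in B, (f z - f x) ^ 2) + 2 * ∫ z in B, (f z - f y) ^ 2 := by
        rw [integral_add i2x i2y, integral_const_mul, integral_const_mul]
      have e4 : (∫ z in B, (f z - f x) ^ 2) ≤ g x :=
        setIntegral_mono_set (hIB x _ measure_ball_lt_top)
          (Filter.Eventually.of_forall fun z => sq_nonneg _)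
          (HasSubset.Subset.eventuallyLE Set.inter_subset_left)
      have e5 : (∫ z in B, (f z - f y) ^ 2) ≤ g y :=
        setIntegral_mono_set (hIB y _ measure_ball_lt_top)
          (Filter.Eventually.of_forall fun z => sq_nonneg _)
          (HasSubset.Subset.eventuallyLE Set.inter_subset_right)
      linarith
    have h6 : (f x - f y) ^ 2 * c ≤ 2 * (g x + g y) :=
      le_trans (mul_le_mul_of_nonneg_left hcB (sq_nonneg _)) hkey2
    have h7 : 2 / c * (g x + g y) = 2 * (g x + g y) / c := by ring
    rw [h7, le_div_iff₀ hc]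
    linarith
  -- expansion of the inner integral
  have hinner : ∀ x, (∫ y in V, (f x - f y) ^ 2) = M * f x ^ 2 - 2 * S * f x + Q := by
    intro x
    have h1 : (fun y => (f x - f y) ^ 2) = fun y => (f x ^ 2 - 2 * f x * f y) + f y ^ 2 := by
      funext y; ring
    have j0 : IntegrableOn (fun _ : EuclideanSpace ℝ (Fin n) => f x ^ 2) V volume :=
      integrableOn_const hVfin.ne
    have j2 : IntegrableOn (fun y => 2 * f x * f y) V volume := hfV.const_mul _
    have j1 : IntegrableOn (fun y => f x ^ 2 - 2 * f x * f y) V volume := j0.sub j2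
    rw [h1, integral_add j1 hf2V, integral_sub j0 j2, setIntegral_const, measureReal_def, integral_const_mul,
      smul_eq_mul, ← hSdef, ← hQdef, ← hMdef]
    ring
  have iA : IntegrableOn (fun x => M * f x ^ 2) V volume := hf2V.const_mul M
  have iB : IntegrableOn (fun x => 2 * S * f x) V volume := hfV.const_mul (2 * S)
  have iAB : IntegrableOn (fun x => M * f x ^ 2 - 2 * S * f x) V volume := iA.sub iB
  have hD : (∫ x in V, ∫ y in V, (f x - f y) ^ 2) = 2 * (M * Q - S ^ 2) := by
    calc (∫ x in V, ∫ y in V, (f x - f y) ^ 2)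
        = ∫ x in V, (M * f x ^ 2 - 2 * S * f x + Q) := by simp only [hinner]
      _ = 2 * (M * Q - S ^ 2) := by
          rw [integral_add iAB iQ, integral_sub iA iB, integral_const_mul, integral_const_mul,
            setIntegral_const, measureReal_def, smul_eq_mul, ← hSdef, ← hQdef, ← hMdef]
          ring
  -- the double integral inequality
  have iEG : IntegrableOn (fun _ : EuclideanSpace ℝ (Fin n) => EG) V volume :=
    integrableOn_const hVfin.ne
  have hinner2 : ∀ x, (∫ y in V, 2 / c * (g x + g y)) = 2 / c * (M * g x + EG) := by
    intro x
    have j0 : IntegrableOn (fun _ : EuclideanSpace ℝ (Fin n) => g x) V volume :=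
      integrableOn_const hVfin.ne
    rw [integral_const_mul, integral_add j0 hgV, setIntegral_const, measureReal_def, smul_eq_mul,
      ← hMdef, ← hEGdef]
  have step1 : ∀ x ∈ V, (∫ y in V, (f x - f y) ^ 2) ≤ 2 / c * (M * g x + EG) := by
    intro x hx
    rw [← hinner2 x]
    have j0 : IntegrableOn (fun _ : EuclideanSpace ℝ (Fin n) => g x) V volume :=
      integrableOn_const hVfin.ne
    have jL : IntegrableOn (fun y => (f x - f y) ^ 2) V volume := by
      have h1 : (fun y => (f x - f y) ^ 2) = fun y => (f y - f x) ^ 2 := by funext y; ring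
      rw [h1]; exact hIB x V hVfin
    have jR : IntegrableOn (fun y => 2 / c * (g x + g y)) V volume := (j0.add hgV).const_mul (2 / c)
    exact setIntegral_mono_on jL jR hV (fun y hy => key x hx y hy)
  have houter : (∫ x in V, ∫ y in V, (f x - f y) ^ 2)
      ≤ ∫ x in V, 2 / c * (M * g x + EG) := by
    have jL : IntegrableOn (fun x => ∫ y in V, (f x - f y) ^ 2) V volume := by
      have h1 : (fun x => ∫ y in V, (f x - f y) ^ 2)
          = fun x => M * f x ^ 2 - 2 * S * f x + Q := funext fun x => hinner x
      rw [h1]; exact iAB.add iQ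
    have jR : IntegrableOn (fun x => 2 / c * (M * g x + EG)) V volume :=
      ((hgV.const_mul M).add iEG).const_mul (2 / c)
    exact setIntegral_mono_on jL jR hV (fun x hx => step1 x hx)
  have hRHS : (∫ x in V, 2 / c * (M * g x + EG)) = 2 / c * (2 * M * EG) := by
    have jM : IntegrableOn (fun x => M * g x) V volume := hgV.const_mul M
    rw [integral_const_mul, integral_add jM iEG, integral_const_mul, setIntegral_const, measureReal_def,
      smul_eq_mul, ← hMdef, ← hEGdef]
    ring
  have hfinal : M * Q - S ^ 2 ≤ 2 / c * EG * M := by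
    have h1 : 2 * (M * Q - S ^ 2) ≤ 2 / c * (2 * M * EG) := by
      rw [← hD, ← hRHS]; exact houter
    nlinarith
  -- variance expansion
  have hVar : (∫ x in V, (f x - M⁻¹ * S) ^ 2) = (M * Q - S ^ 2) / M := by
    have h1 : (fun x => (f x - M⁻¹ * S) ^ 2)
        = fun x => (f x ^ 2 - 2 * (M⁻¹ * S) * f x) + (M⁻¹ * S) ^ 2 := by
      funext x; ring
    have k2 : IntegrableOn (fun x => 2 * (M⁻¹ * S) * f x) V volume := hfV.const_mul _
    have k1 : IntegrableOn (fun x => f x ^ 2 - 2 * (M⁻¹ * S) * f x) V volume := hf2V.sub k2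
    have k0 : IntegrableOn (fun _ : EuclideanSpace ℝ (Fin n) => (M⁻¹ * S) ^ 2) V volume :=
      integrableOn_const hVfin.ne
    rw [h1, integral_add k1 k0, integral_sub hf2V k2, integral_const_mul, setIntegral_const, measureReal_def,
      smul_eq_mul, ← hSdef, ← hQdef, ← hMdef]
    have hMM : M⁻¹ * M = 1 := inv_mul_cancel₀ hM.ne'
    rw [eq_div_iff hM.ne']
    linear_combination (M⁻¹ * M * S ^ 2 - S ^ 2) * hMM
  rw [hVar, div_le_iff₀ hM]
  exact hfinal

/-- Poincaré-type inequality: the variance of `f` over a small cell `V` of diameter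
at most `2ε` is bounded by the average dispersion of `f` at scale `r > ε`,
with constant `2 / (ν_n (r - ε)^n)` where `ν_n` is the volume of the unit ball. -/
theorem poincare_cell_inequality (n : ℕ) (hn : 1 ≤ n) (ε r : ℝ)
    (hε : 0 < ε) (hεr : ε < r)
    (V : Set (EuclideanSpace ℝ (Fin n))) (hV : MeasurableSet V)
    (hVpos : 0 < volume V) (hVfin : volume V < ⊤)
    (hdiam : EMetric.diam V ≤ ENNReal.ofReal (2 * ε))
    (f : EuclideanSpace ℝ (Fin n) → ℝ) (hf : MemLp f 2 volume) :
    ∫ x in V, (f x - (volume V).toReal⁻¹ * ∫ y in V, f y) ^ 2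
      ≤ (2 / ((volume (Metric.ball (0 : EuclideanSpace ℝ (Fin n)) 1)).toReal * (r - ε) ^ n))
          * ∫ x in V, ∫ y in Metric.ball x r, (f y - f x) ^ 2 := by
  obtain ⟨f', hfm', hff'⟩ : ∃ f', StronglyMeasurable f' ∧ f =ᵐ[volume] f' :=
    ⟨hf.1.mk f, hf.1.stronglyMeasurable_mk, hf.1.ae_eq_mk⟩
  have hf' : MemLp f' 2 volume := hf.ae_eq hff'
  have hS : (∫ y in V, f y) = ∫ y in V, f' y :=
    integral_congr_ae (ae_restrict_of_ae hff')
  have hL : (∫ x in V, (f x - (volume V).toReal⁻¹ * ∫ y in V, f y) ^ 2)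
      = ∫ x in V, (f' x - (volume V).toReal⁻¹ * ∫ y in V, f' y) ^ 2 := by
    rw [← hS]
    exact integral_congr_ae (ae_restrict_of_ae (hff'.mono fun x hx => by dsimp only; rw [hx]))
  have hR : (∫ x in V, ∫ y in Metric.ball x r, (f y - f x) ^ 2)
      = ∫ x in V, ∫ y in Metric.ball x r, (f' y - f' x) ^ 2 := by
    apply integral_congr_ae
    apply ae_restrict_of_ae
    filter_upwards [hff'] with x hx
    rw [hx]
    exact integral_congr_ae (ae_restrict_of_ae (hff'.mono fun y hy => by dsimp only; rw [hy]))
  rw [hL, hR]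
  exact poincare_aux n hn ε r hε hεr V hV hVpos hVfin hdiam f' hf' hfm'
end

section
/- Let n ≥ 1 and r > 0, work in Euclidean space ℝⁿ with Lebesgue measure, and let ν_n denote the volume of the unit ball in ℝⁿ. Then for every continuously differentiable function f : ℝⁿ → ℝ with compact support, ∫_{ℝⁿ} ∫_{B_r(x)} ( f(y) − f(x) )² dy dx ≤ ( ν_n · r^{n+2} / (n+2) ) · ∫_{ℝⁿ} ‖∇f(x)‖² dx, where B_r(x) denotes the open ball of radius r centered at x and ∇f denotes the gradient of f. -/
open MeasureTheory Metric Set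

lemma sq_integral_le_integral_sq {α : Type*} {m : MeasurableSpace α} {μ : Measure α}
    [IsProbabilityMeasure μ] {h : α → ℝ} (h1 : Integrable h μ)
    (h2 : Integrable (fun x => h x ^ 2) μ) :
    (∫ x, h x ∂μ) ^ 2 ≤ ∫ x, h x ^ 2 ∂μ := by
  set c := ∫ x, h x ∂μ with hc
  have h0 : 0 ≤ ∫ x, (h x - c) ^ 2 ∂μ := integral_nonneg fun x => sq_nonneg _
  have he : ∀ x, (h x - c) ^ 2 = h x ^ 2 - (2 * c) * h x + c ^ 2 := fun x => by ring
  have : ∫ x, (h x - c) ^ 2 ∂μ = (∫ x, h x ^ 2 ∂μ) - c ^ 2 := by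
    simp only [he]
    have e1 : Integrable (fun x => h x ^ 2 - 2 * c * h x) μ := h2.sub (h1.const_mul _)
    rw [integral_add e1 (integrable_const _), integral_sub h2 (h1.const_mul _),
      integral_const_mul, integral_const]
    simp [← hc]; ring
  linarith

lemma aux_integrable_prod {V W : Type*}
    [TopologicalSpace V] [MeasurableSpace V] [OpensMeasurableSpace V]
    [TopologicalSpace W] [MeasurableSpace W] [OpensMeasurableSpace W]
    [SecondCountableTopology V] [SecondCountableTopology W] [T2Space V]
    (μ : Measure V) (ν : Measure W) [SigmaFinite μ] [SigmaFinite ν]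
    {F : V × W → ℝ} (hF : Continuous F) {A : Set V} (hA : IsCompact A)
    (hAfin : μ A ≠ ⊤) {s : Set W} (hs : MeasurableSet s) (hsfin : ν s ≠ ⊤)
    {C : ℝ} (hC : ∀ x y, y ∈ s → ‖F (x, y)‖ ≤ C)
    (hz : ∀ x y, y ∈ s → x ∉ A → F (x, y) = 0) :
    Integrable F (μ.prod (ν.restrict s)) := by
  haveI : SigmaFinite (ν.restrict s) := by infer_instance
  have hmem : ∀ᵐ p ∂(μ.prod (ν.restrict s)), p.2 ∈ s := by
    rw [ae_iff]
    have : {p : V × W | ¬ p.2 ∈ s} = (univ : Set V) ×ˢ sᶜ := by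
      ext p; simp
    rw [this, Measure.prod_prod, Measure.restrict_apply hs.compl]
    simp
  refine Integrable.mono' (g := (A ×ˢ (univ : Set W)).indicator fun _ => max C 0) ?_ hF.aestronglyMeasurable ?_
  · rw [integrable_indicator_iff (hA.measurableSet.prod MeasurableSet.univ)]
    refine integrableOn_const (ne_of_lt ?_) (by simp)
    rw [Measure.prod_prod]
    exact ENNReal.mul_lt_top hAfin.lt_top (by simpa using hsfin.lt_top)
  · filter_upwards [hmem] with p hp
    by_cases hpA : p.1 ∈ A
    · have : p ∈ A ×ˢ (univ : Set W) := ⟨hpA, mem_univ _⟩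
      rw [indicator_of_mem this]
      exact le_max_of_le_left (hC p.1 p.2 hp)
    · have : F p = 0 := hz p.1 p.2 hp hpA
      rw [this]
      simp [indicator_nonneg (fun _ _ => le_max_right _ _)]
open MeasureTheory Metric Set RealInnerProductSpace Pointwise

variable {n : ℕ}

local notation "E" => EuclideanSpace ℝ (Fin n)

-- change of variables by orthonormal basis
lemma genJ (r : ℝ) (b : OrthonormalBasis (Fin n) ℝ E) (i : Fin n) :
    ∫ v in ball (0 : E) r, ⟪b i, v⟫ ^ 2 = ∫ v in ball (0 : E) r, (v i) ^ 2 := by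
  have hpre : (b.repr : E → E) ⁻¹' (ball (0 : E) r) = ball (0 : E) r := by
    ext v
    simp [mem_ball_zero_iff, b.repr.norm_map]
  have := (b.measurePreserving_repr).setIntegral_preimage_emb
    (b.repr.toHomeomorph.measurableEmbedding) (fun u : E => (u i) ^ 2) (ball (0 : E) r)
  rw [hpre] at this
  rw [← this]
  refine setIntegral_congr_fun measurableSet_ball fun v _ => ?_
  rw [b.repr_apply_apply]

lemma intOn_coord (r : ℝ) (i : Fin n) :
    IntegrableOn (fun v : E => (v i) ^ 2) (ball (0 : E) r) volume := by
  have hc : Continuous fun v : E => (v i) ^ 2 := by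
    have : Continuous fun v : E => v i := (EuclideanSpace.proj i).continuous
    fun_prop
  exact (hc.continuousOn.integrableOn_compact (isCompact_closedBall 0 r)).mono_set
    ball_subset_closedBall

lemma normsq_int (hn : 1 ≤ n) {r : ℝ} (hr : 0 < r) :
    ∫ v in ball (0 : E) r, ‖v‖ ^ 2
      = (n : ℝ) * ((volume (ball (0 : E) 1)).toReal * r ^ (n + 2) / ((n : ℝ) + 2)) := by
  haveI : Nontrivial E := by
    have : 0 < n := hn
    exact ⟨EuclideanSpace.single ⟨0, this⟩ 1, 0, by
      intro h
      have := congrArg (fun w : E => w ⟨0, this⟩) h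
      simp [EuclideanSpace.single_apply] at this⟩
  have key := integral_fun_norm_addHaar (volume : Measure E)
    (fun t => (Set.Iio r).indicator (fun t : ℝ => t ^ 2) t)
  have hdim : Module.finrank ℝ E = n := finrank_euclideanSpace_fin
  rw [hdim] at key
  have lhs_eq : ∫ x : E, (Set.Iio r).indicator (fun t : ℝ => t ^ 2) ‖x‖
      = ∫ v in ball (0 : E) r, ‖v‖ ^ 2 := by
    rw [← integral_indicator measurableSet_ball]
    congr 1
    ext v
    by_cases hv : v ∈ ball (0 : E) r
    · rw [indicator_of_mem hv, indicator_of_mem (by simpa [mem_ball_zero_iff] using hv)]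
    · rw [indicator_of_notMem hv, indicator_of_notMem (by simpa [mem_ball_zero_iff] using hv)]
  have rhs_eq : ∫ y in Set.Ioi (0 : ℝ), y ^ (n - 1) • (Set.Iio r).indicator (fun t : ℝ => t ^ 2) y
      = r ^ (n + 2) / ((n : ℝ) + 2) := by
    have e1 : ∀ y : ℝ, y ^ (n - 1) • (Set.Iio r).indicator (fun t : ℝ => t ^ 2) y
        = (Set.Iio r).indicator (fun t : ℝ => t ^ (n + 1)) y := by
      intro y
      by_cases hy : y ∈ Set.Iio r
      · rw [indicator_of_mem hy, indicator_of_mem hy, smul_eq_mul, ← pow_add]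
        congr 1
        omega
      · rw [indicator_of_notMem hy, indicator_of_notMem hy, smul_zero]
    simp only [e1]
    rw [setIntegral_indicator measurableSet_Iio]
    have : Set.Ioi (0:ℝ) ∩ Set.Iio r = Set.Ioo 0 r := Ioi_inter_Iio
    rw [this, ← integral_Ioc_eq_integral_Ioo, ← intervalIntegral.integral_of_le hr.le,
      integral_pow]
    push_cast
    ring
  rw [lhs_eq, rhs_eq] at key
  rw [key]
  simp only [nsmul_eq_mul, smul_eq_mul, measureReal_def]
  ring

lemma coord_int_eq (hn : 1 ≤ n) {r : ℝ} (hr : 0 < r) (i : Fin n) :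
    ∫ v in ball (0 : E) r, (v i) ^ 2
      = (volume (ball (0 : E) 1)).toReal * r ^ (n + 2) / ((n : ℝ) + 2) := by
  set c := (volume (ball (0 : E) 1)).toReal * r ^ (n + 2) / ((n : ℝ) + 2) with hc
  have swap : ∀ j : Fin n, ∫ v in ball (0 : E) r, (v i) ^ 2
      = ∫ v in ball (0 : E) r, (v j) ^ 2 := by
    intro j
    classical
    have h1 := genJ r ((EuclideanSpace.basisFun (Fin n) ℝ).reindex (Equiv.swap i j)) j
    have h2 : ∀ v : E, ⟪((EuclideanSpace.basisFun (Fin n) ℝ).reindex (Equiv.swap i j)) j, v⟫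
        = v i := by
      intro v
      rw [OrthonormalBasis.reindex_apply]
      simp [EuclideanSpace.basisFun_apply, EuclideanSpace.inner_single_left, Equiv.swap_apply_right]
    rw [← h1]
    refine setIntegral_congr_fun measurableSet_ball fun v _ => ?_
    rw [h2]
  have hsum : ∑ j : Fin n, ∫ v in ball (0 : E) r, (v j) ^ 2
      = (n : ℝ) * c := by
    rw [← integral_finset_sum _ (fun j _ => intOn_coord r j)]
    have : ∀ v : E, ∑ j : Fin n, (v j) ^ 2 = ‖v‖ ^ 2 := by
      intro v
      rw [PiLp.norm_sq_eq_of_L2]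
      simp [Real.norm_eq_abs, sq_abs]
    calc ∫ v in ball (0 : E) r, ∑ j : Fin n, (v j) ^ 2
        = ∫ v in ball (0 : E) r, ‖v‖ ^ 2 :=
          setIntegral_congr_fun measurableSet_ball fun v _ => this v
      _ = (n : ℝ) * c := normsq_int hn hr
  have hall : ∑ j : Fin n, ∫ v in ball (0 : E) r, (v j) ^ 2
      = (n : ℝ) * ∫ v in ball (0 : E) r, (v i) ^ 2 := by
    rw [Finset.sum_congr rfl fun j _ => (swap j).symm]
    simp [mul_comm]
  have hn' : (n : ℝ) ≠ 0 := Nat.cast_ne_zero.2 (by omega)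
  have := hall.symm.trans hsum
  exact mul_left_cancel₀ hn' this

lemma moment (hn : 1 ≤ n) {r : ℝ} (hr : 0 < r) (w : E) :
    ∫ v in ball (0 : E) r, ⟪w, v⟫ ^ 2
      = ‖w‖ ^ 2 * ((volume (ball (0 : E) 1)).toReal * r ^ (n + 2) / ((n : ℝ) + 2)) := by
  rcases eq_or_ne w 0 with rfl | hw
  · simp
  · have i0 : Fin n := ⟨0, hn⟩
    set u : E := ‖w‖⁻¹ • w with hu
    have hunorm : ‖u‖ = 1 := norm_smul_inv_norm hw
    have hcard : Module.finrank ℝ E = Fintype.card (Fin n) := by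
      rw [finrank_euclideanSpace_fin, Fintype.card_fin]
    have horth : Orthonormal ℝ (Set.restrict {(⟨0, hn⟩ : Fin n)} (fun _ : Fin n => u)) := by
      rw [orthonormal_iff_ite]
      rintro ⟨i, hi⟩ ⟨j, hj⟩
      simp only [Set.mem_singleton_iff] at hi hj
      subst hi; subst hj
      rw [if_pos rfl]
      show ⟪u, u⟫ = 1
      rw [real_inner_self_eq_norm_sq, hunorm, one_pow]
    obtain ⟨b, hb⟩ := horth.exists_orthonormalBasis_extension_of_card_eq hcard
    have hbu : b ⟨0, hn⟩ = u := hb _ rfl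
    have hwin : ∀ v : E, ⟪w, v⟫ = ‖w‖ * ⟪b ⟨0, hn⟩, v⟫ := by
      intro v
      rw [hbu, hu, real_inner_smul_left, ← mul_assoc, mul_inv_cancel₀ (norm_ne_zero_iff.2 hw),
        one_mul]
    calc ∫ v in ball (0 : E) r, ⟪w, v⟫ ^ 2
        = ∫ v in ball (0 : E) r, ‖w‖ ^ 2 * ⟪b ⟨0, hn⟩, v⟫ ^ 2 :=
          setIntegral_congr_fun measurableSet_ball fun v _ => by rw [hwin v]; ring
      _ = ‖w‖ ^ 2 * ∫ v in ball (0 : E) r, ⟪b ⟨0, hn⟩, v⟫ ^ 2 := integral_const_mul _ _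
      _ = _ := by rw [genJ r b, coord_int_eq hn hr]

/-- The average dispersion of a compactly supported `C¹` function `f` at scale `r`
is bounded by `(ν_n r^{n+2}/(n+2))` times the Dirichlet energy of `f`,
where `ν_n` is the volume of the unit ball in `ℝⁿ`. -/
theorem dispersion_le_dirichlet_energy (n : ℕ) (hn : 1 ≤ n) (r : ℝ) (hr : 0 < r)
    (f : EuclideanSpace ℝ (Fin n) → ℝ)
    (hf : ContDiff ℝ 1 f) (hsupp : HasCompactSupport f) :
    ∫ x, ∫ y in Metric.ball x r, (f y - f x) ^ 2
      ≤ ((volume (Metric.ball (0 : EuclideanSpace ℝ (Fin n)) 1)).toReal * r ^ (n + 2)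
            / ((n : ℝ) + 2))
          * ∫ x, ‖gradient f x‖ ^ 2 := by
  set c := (volume (Metric.ball (0 : EuclideanSpace ℝ (Fin n)) 1)).toReal * r ^ (n + 2)
    / ((n : ℝ) + 2) with hc
  set g := gradient f with hg
  have hgc : Continuous g := by
    have h1 : Continuous (fderiv ℝ f) := hf.continuous_fderiv one_ne_zero
    exact (InnerProductSpace.toDual ℝ (EuclideanSpace ℝ (Fin n))).symm.continuous.comp h1
  have hgs : HasCompactSupport g := by
    have h1 : HasCompactSupport (fderiv ℝ f) := hsupp.fderiv ℝ
    exact h1.comp_left (by simp)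
  have hinner : ∀ y v, ⟪g y, v⟫ = fderiv ℝ f y v := fun y v => by
    rw [hg]
    exact InnerProductSpace.toDual_symm_apply
  -- bounds
  obtain ⟨Mf, hMf⟩ := hsupp.exists_bound_of_continuous hf.continuous
  obtain ⟨Mg, hMg⟩ := hgs.exists_bound_of_continuous hgc
  have hMg0 : 0 ≤ Mg := le_trans (norm_nonneg _) (hMg 0)
  -- FTC
  have ftc : ∀ x v : EuclideanSpace ℝ (Fin n),
      f (x + v) - f x = ∫ t in (0:ℝ)..1, ⟪g (x + t • v), v⟫ := by
    intro x v
    have hdiff := hf.differentiable one_ne_zero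
    have hd : ∀ t : ℝ, HasDerivAt (fun t : ℝ => f (x + t • v)) (⟪g (x + t • v), v⟫) t := by
      intro t
      have h1 : HasDerivAt (fun t : ℝ => x + t • v) v t := by
        simpa using ((hasDerivAt_id t).smul_const v).const_add x
      have h2 := (hdiff (x + t • v)).hasFDerivAt.comp_hasDerivAt t h1
      rw [hinner]
      exact h2
    have hcont : Continuous fun t : ℝ => ⟪g (x + t • v), v⟫ :=
      (hgc.comp (continuous_const.add ((continuous_id (X := ℝ)).smul continuous_const))).inner continuous_const
    have := intervalIntegral.integral_eq_sub_of_hasDerivAt (f := fun t : ℝ => f (x + t • v))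
      (fun t _ => hd t) (hcont.intervalIntegrable 0 1)
    rw [this]
    norm_num
  haveI hprob : IsProbabilityMeasure (volume.restrict (Set.Ioc (0:ℝ) 1)) := by
    constructor
    simp [Real.volume_Ioc]
  -- pointwise Jensen
  have key2 : ∀ x v : EuclideanSpace ℝ (Fin n),
      (f (x + v) - f x) ^ 2 ≤ ∫ t in Set.Ioc (0:ℝ) 1, ⟪g (x + t • v), v⟫ ^ 2 := by
    intro x v
    have hcont : Continuous fun t : ℝ => ⟪g (x + t • v), v⟫ :=
      (hgc.comp (continuous_const.add ((continuous_id (X := ℝ)).smul continuous_const))).inner continuous_const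
    rw [ftc, intervalIntegral.integral_of_le zero_le_one]
    refine sq_integral_le_integral_sq ?_ ?_
    · exact (hcont.integrableOn_Icc (a := 0) (b := 1)).mono_set Set.Ioc_subset_Icc_self
    · exact (((hcont.pow 2).integrableOn_Icc (a := 0) (b := 1))).mono_set Set.Ioc_subset_Icc_self
  -- per v inequality
  have perv : ∀ v : EuclideanSpace ℝ (Fin n),
      ∫ x, (f (x + v) - f x) ^ 2 ≤ ∫ x, ⟪g x, v⟫ ^ 2 := by
    intro v
    set Fv : EuclideanSpace ℝ (Fin n) × ℝ → ℝ := fun p => ⟪g (p.1 + p.2 • v), v⟫ ^ 2 with hFv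
    have hFvc : Continuous Fv := by
      have hmove : Continuous fun p : EuclideanSpace ℝ (Fin n) × ℝ => p.1 + p.2 • v :=
        continuous_fst.add (continuous_snd.smul continuous_const)
      exact ((hgc.comp hmove).inner continuous_const).pow 2
    have hA : IsCompact (tsupport g + Metric.closedBall (0 : EuclideanSpace ℝ (Fin n)) ‖v‖) :=
      IsCompact.add hgs (isCompact_closedBall 0 ‖v‖)
    have hAfin : volume (tsupport g + Metric.closedBall (0 : EuclideanSpace ℝ (Fin n)) ‖v‖) ≠ ⊤ :=
      ne_of_lt hA.measure_lt_top
    have hsfin : volume (Set.Ioc (0:ℝ) 1) ≠ ⊤ := by simp [Real.volume_Ioc]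
    have hCb : ∀ (x : EuclideanSpace ℝ (Fin n)) (t : ℝ), t ∈ Set.Ioc (0:ℝ) 1 →
        ‖Fv (x, t)‖ ≤ (Mg * ‖v‖) ^ 2 := by
      intro x t _
      have h1 : |⟪g (x + t • v), v⟫| ≤ Mg * ‖v‖ :=
        (abs_real_inner_le_norm _ _).trans (by gcongr; exact hMg _)
      have h2 : ‖Fv (x, t)‖ = |⟪g (x + t • v), v⟫| ^ 2 := by
        simp only [hFv, Real.norm_eq_abs, abs_pow, sq_abs]
      rw [h2]
      exact pow_le_pow_left₀ (abs_nonneg _) h1 2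
    have hzz : ∀ (x : EuclideanSpace ℝ (Fin n)) (t : ℝ), t ∈ Set.Ioc (0:ℝ) 1 →
        x ∉ tsupport g + Metric.closedBall (0 : EuclideanSpace ℝ (Fin n)) ‖v‖ →
        Fv (x, t) = 0 := by
      intro x t ht hx
      have hxt : x + t • v ∉ tsupport g := by
        intro hmem
        refine hx ⟨x + t • v, hmem, -(t • v), ?_, add_neg_cancel_right x (t • v)⟩
        simp only [Metric.mem_closedBall, dist_zero_right, norm_neg, norm_smul,
          Real.norm_eq_abs]
        calc |t| * ‖v‖ ≤ 1 * ‖v‖ := by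
              gcongr
              rw [abs_le]; exact ⟨by linarith [ht.1], ht.2⟩
          _ = ‖v‖ := one_mul _
      simp [hFv, image_eq_zero_of_notMem_tsupport hxt]
    have hFint : Integrable Fv (volume.prod (volume.restrict (Set.Ioc (0:ℝ) 1))) :=
      aux_integrable_prod _ _ hFvc hA hAfin measurableSet_Ioc hsfin hCb hzz
    have int1 : Integrable fun x => (f (x + v) - f x) ^ 2 := by
      have hK : IsCompact (tsupport f ∪ (fun y : EuclideanSpace ℝ (Fin n) => y - v) '' tsupport f) :=
        hsupp.union (hsupp.image (continuous_sub_right v))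
      have hcs : HasCompactSupport fun x : EuclideanSpace ℝ (Fin n) => (f (x + v) - f x) ^ 2 := by
        refine HasCompactSupport.intro hK fun x hx => ?_
        rw [Set.mem_union, not_or] at hx
        have h1 : f x = 0 := image_eq_zero_of_notMem_tsupport hx.1
        have h2 : f (x + v) = 0 := by
          by_contra h2
          exact hx.2 ⟨x + v, subset_tsupport _ h2, add_sub_cancel_right x v⟩
        rw [h1, h2, sub_zero, zero_pow two_ne_zero]
      have hcont : Continuous fun x : EuclideanSpace ℝ (Fin n) => (f (x + v) - f x) ^ 2 :=
        (((hf.continuous).comp (continuous_add_right v)).sub hf.continuous).pow 2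
      exact hcont.integrable_of_hasCompactSupport hcs
    have int2 : Integrable fun x => ∫ t in Set.Ioc (0:ℝ) 1, Fv (x, t) :=
      hFint.integral_prod_left
    calc ∫ x, (f (x + v) - f x) ^ 2
        ≤ ∫ x, ∫ t in Set.Ioc (0:ℝ) 1, Fv (x, t) :=
          integral_mono int1 int2 fun x => key2 x v
      _ = ∫ t in Set.Ioc (0:ℝ) 1, ∫ x, Fv (x, t) := integral_integral_swap hFint
      _ = ∫ t in Set.Ioc (0:ℝ) 1, ∫ x, ⟪g x, v⟫ ^ 2 := by
          refine setIntegral_congr_fun measurableSet_Ioc fun t _ => ?_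
          exact integral_add_right_eq_self (fun x => ⟪g x, v⟫ ^ 2) (t • v)
      _ = ∫ x, ⟪g x, v⟫ ^ 2 := by
          rw [setIntegral_const]
          simp [Real.volume_Ioc]
  -- global integrabilities on the product with the ball
  have hMf0 : 0 ≤ Mf := le_trans (norm_nonneg _) (hMf 0)
  set H : EuclideanSpace ℝ (Fin n) × EuclideanSpace ℝ (Fin n) → ℝ :=
    fun p => (f (p.1 + p.2) - f p.1) ^ 2 with hH
  have hHc : Continuous H :=
    ((hf.continuous.comp (continuous_fst.add continuous_snd)).sub
      (hf.continuous.comp continuous_fst)).pow 2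
  have hAH : IsCompact (tsupport f + Metric.closedBall (0 : EuclideanSpace ℝ (Fin n)) r) :=
    IsCompact.add hsupp (isCompact_closedBall 0 r)
  have hballfin : volume (Metric.ball (0 : EuclideanSpace ℝ (Fin n)) r) ≠ ⊤ :=
    measure_ball_lt_top.ne
  have hHint : Integrable H
      (volume.prod (volume.restrict (Metric.ball (0 : EuclideanSpace ℝ (Fin n)) r))) := by
    refine aux_integrable_prod _ _ hHc hAH (ne_of_lt hAH.measure_lt_top) measurableSet_ball
      hballfin (C := (2 * Mf) ^ 2) ?_ ?_
    · intro x v _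
      have h1 : |f (x + v) - f x| ≤ 2 * Mf := by
        calc |f (x + v) - f x| ≤ |f (x + v)| + |f x| := abs_sub _ _
          _ ≤ Mf + Mf := add_le_add (hMf _) (hMf _)
          _ = 2 * Mf := by ring
      have h2 : ‖H (x, v)‖ = |f (x + v) - f x| ^ 2 := by
        simp only [hH, Real.norm_eq_abs, abs_pow, sq_abs]
      rw [h2]
      exact pow_le_pow_left₀ (abs_nonneg _) h1 2
    · intro x v hv hx
      have h1 : f x = 0 := by
        by_contra h1
        exact hx ⟨x, subset_tsupport _ h1, 0, by simp [hr.le], add_zero x⟩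
      have h2 : f (x + v) = 0 := by
        by_contra h2
        refine hx ⟨x + v, subset_tsupport _ h2, -v, ?_, add_neg_cancel_right x v⟩
        simp only [Metric.mem_closedBall, dist_zero_right, norm_neg]
        exact (mem_ball_zero_iff.1 hv).le
      simp [hH, h1, h2]
  set G : EuclideanSpace ℝ (Fin n) × EuclideanSpace ℝ (Fin n) → ℝ :=
    fun p => ⟪g p.1, p.2⟫ ^ 2 with hG
  have hGc : Continuous G := ((hgc.comp continuous_fst).inner continuous_snd).pow 2
  have hGint : Integrable G
      (volume.prod (volume.restrict (Metric.ball (0 : EuclideanSpace ℝ (Fin n)) r))) := by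
    refine aux_integrable_prod _ _ hGc hgs (ne_of_lt hgs.measure_lt_top) measurableSet_ball
      hballfin (C := (Mg * r) ^ 2) ?_ ?_
    · intro x v hv
      have h1 : |⟪g x, v⟫| ≤ Mg * r := by
        refine (abs_real_inner_le_norm _ _).trans ?_
        have := (mem_ball_zero_iff.1 hv).le
        gcongr
        exact hMg _
      have h2 : ‖G (x, v)‖ = |⟪g x, v⟫| ^ 2 := by
        simp only [hG, Real.norm_eq_abs, abs_pow, sq_abs]
      rw [h2]
      exact pow_le_pow_left₀ (abs_nonneg _) h1 2
    · intro x v _ hx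
      have h1 : g x = 0 := image_eq_zero_of_notMem_tsupport hx
      simp [hG, h1]
  -- change of variables in the inner integral
  have step1 : ∀ x : EuclideanSpace ℝ (Fin n),
      ∫ y in Metric.ball x r, (f y - f x) ^ 2
        = ∫ v in Metric.ball (0 : EuclideanSpace ℝ (Fin n)) r, (f (x + v) - f x) ^ 2 := by
    intro x
    have mp : MeasurePreserving (fun v : EuclideanSpace ℝ (Fin n) => x + v) volume volume :=
      measurePreserving_add_left volume x
    have hemb : MeasurableEmbedding (fun v : EuclideanSpace ℝ (Fin n) => x + v) :=
      (Homeomorph.addLeft x).measurableEmbedding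
    have hpre : (fun v : EuclideanSpace ℝ (Fin n) => x + v) ⁻¹' Metric.ball x r
        = Metric.ball (0 : EuclideanSpace ℝ (Fin n)) r := by
      ext v
      simp [Metric.mem_ball, dist_eq_norm, add_sub_cancel_left]
    have := mp.setIntegral_preimage_emb hemb (fun y => (f y - f x) ^ 2) (Metric.ball x r)
    rw [hpre] at this
    exact this.symm
  calc ∫ x, ∫ y in Metric.ball x r, (f y - f x) ^ 2
      = ∫ x, ∫ v in Metric.ball (0 : EuclideanSpace ℝ (Fin n)) r, (f (x + v) - f x) ^ 2 :=
        integral_congr_ae (Filter.Eventually.of_forall fun x => step1 x)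
    _ = ∫ v in Metric.ball (0 : EuclideanSpace ℝ (Fin n)) r, ∫ x, (f (x + v) - f x) ^ 2 :=
        integral_integral_swap hHint
    _ ≤ ∫ v in Metric.ball (0 : EuclideanSpace ℝ (Fin n)) r, ∫ x, ⟪g x, v⟫ ^ 2 := by
        refine setIntegral_mono_on ?_ ?_ measurableSet_ball fun v _ => perv v
        · exact hHint.integral_prod_right
        · exact hGint.integral_prod_right
    _ = ∫ x, ∫ v in Metric.ball (0 : EuclideanSpace ℝ (Fin n)) r, ⟪g x, v⟫ ^ 2 :=
        (integral_integral_swap hGint).symm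
    _ = ∫ x, ‖g x‖ ^ 2 * c :=
        integral_congr_ae (Filter.Eventually.of_forall fun x => moment hn hr (g x))
    _ = c * ∫ x, ‖g x‖ ^ 2 := by
        rw [integral_mul_const, mul_comm]
end

section
/- Let (Ω, d) be a metric space with a σ-finite Borel measure μ. Let ε, ρ > 0 with 2ε < ρ, let x_1, …, x_N be points of Ω, and let V_1, …, V_N be pairwise disjoint measurable sets whose union is Ω, with V_i ⊆ B_ε(x_i) and 0 < μ(V_i) < ∞ for each i, where B_ε(x_i) is the open ball of radius ε about x_i. For u : {1,…,N} → ℝ let g = Σ_{i=1}^N u(i)·1_{V_i} be the associated piecewise constant function. Then ∫∫_{{(x,y) ∈ Ω × Ω : d(x,y) < ρ − 2ε}} ( g(x) − g(y) )² dμ(x) dμ(y) ≤ Σ over ordered pairs (i, j) with d(x_i, x_j) < ρ of μ(V_i)·μ(V_j)·( u(i) − u(j) )². -/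
open MeasureTheory Finset

/-- The dispersion at scale `ρ - 2ε` of the piecewise-constant extension
`g = ∑ i, u i · 1_{V i}` of a discrete function `u` is bounded by the discrete
Dirichlet energy (without its normalizing constant) of `u` on the
`(ε, ρ)`-proximity graph. -/
theorem dispersion_le_discrete_energy {Ω : Type*} [MetricSpace Ω] [MeasurableSpace Ω]
    [BorelSpace Ω] (μ : Measure Ω) [SigmaFinite μ]
    (ε ρ : ℝ) (hε : 0 < ε) (hερ : 2 * ε < ρ) (N : ℕ)
    (x : Fin N → Ω) (V : Fin N → Set Ω) (hmeas : ∀ i, MeasurableSet (V i))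
    (hdisj : Pairwise (Function.onFun Disjoint V))
    (hcover : (⋃ i, V i) = Set.univ)
    (hsub : ∀ i, V i ⊆ Metric.ball (x i) ε)
    (hpos : ∀ i, 0 < μ (V i)) (hfin : ∀ i, μ (V i) < ⊤)
    (u : Fin N → ℝ) :
    ∫ p in {p : Ω × Ω | dist p.1 p.2 < ρ - 2 * ε},
        ((∑ i, Set.indicator (V i) (fun _ => u i) p.1)
          - ∑ i, Set.indicator (V i) (fun _ => u i) p.2) ^ 2 ∂(μ.prod μ)
      ≤ ∑ i, ∑ j, (if dist (x i) (x j) < ρ then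
          (μ (V i)).toReal * (μ (V j)).toReal * (u i - u j) ^ 2 else 0) := by
  set g : Ω → ℝ := fun z => ∑ i, Set.indicator (V i) (fun _ => u i) z with hg_def
  have hgval : ∀ i, ∀ z ∈ V i, g z = u i := by
    intro i z hz
    simp only [hg_def]
    rw [Finset.sum_eq_single i]
    · exact Set.indicator_of_mem hz _
    · intro k _ hk
      exact Set.indicator_of_notMem (fun hzk => (hdisj hk).le_bot ⟨hzk, hz⟩) _
    · simp
  set f : Ω × Ω → ℝ := fun p => (g p.1 - g p.2) ^ 2 with hf_def
  set S : Set (Ω × Ω) := {p | dist p.1 p.2 < ρ - 2 * ε} with hS_def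
  set ν : Measure (Ω × Ω) := (μ.prod μ).restrict S with hν_def
  set T : Fin N × Fin N → Set (Ω × Ω) := fun ij => V ij.1 ×ˢ V ij.2 with hT_def
  have hTmeas : ∀ ij, MeasurableSet (T ij) := fun ij => (hmeas ij.1).prod (hmeas ij.2)
  have hTdisj : Pairwise (Function.onFun Disjoint T) := by
    intro ij kl hne
    refine Set.disjoint_left.2 fun p hp hq => ?_
    rcases hp with ⟨hp1, hp2⟩
    rcases hq with ⟨hq1, hq2⟩
    rcases Prod.ext_iff.not.1 hne with h
    push_neg at h
    by_cases h1 : ij.1 = kl.1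
    · exact (hdisj (h h1)).le_bot ⟨hp2, hq2⟩
    · exact (hdisj h1).le_bot ⟨hp1, hq1⟩
  have hTunion : (⋃ ij, T ij) = Set.univ := by
    ext p
    simp only [Set.mem_iUnion, hT_def, Set.mem_prod, Set.mem_univ, iff_true]
    have h1 : p.1 ∈ ⋃ i, V i := hcover ▸ Set.mem_univ _
    have h2 : p.2 ∈ ⋃ i, V i := hcover ▸ Set.mem_univ _
    rcases Set.mem_iUnion.1 h1 with ⟨i, hi⟩
    rcases Set.mem_iUnion.1 h2 with ⟨j, hj⟩
    exact ⟨(i, j), hi, hj⟩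
  have hTν : ∀ ij, ν (T ij) = μ.prod μ (T ij ∩ S) := fun ij =>
    Measure.restrict_apply (hTmeas ij)
  have hTfin : ∀ ij, ν (T ij) < ⊤ := by
    intro ij
    rw [hTν]
    refine lt_of_le_of_lt (measure_mono Set.inter_subset_left) ?_
    rw [Measure.prod_prod]
    exact ENNReal.mul_lt_top (hfin _) (hfin _)
  have hEq : ∀ ij : Fin N × Fin N, Set.EqOn (fun _ => (u ij.1 - u ij.2) ^ 2) f (T ij) := by
    rintro ij p ⟨hp1, hp2⟩
    simp only [hf_def, hgval ij.1 p.1 hp1, hgval ij.2 p.2 hp2]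
  have hint : ∀ ij, IntegrableOn f (T ij) ν := fun ij =>
    (integrableOn_const (hTfin ij).ne).congr_fun (hEq ij) (hTmeas ij)
  have hdistkey : ∀ i j : Fin N, (T (i, j) ∩ S).Nonempty → dist (x i) (x j) < ρ := by
    rintro i j ⟨p, ⟨hp1, hp2⟩, hpS⟩
    have h1 : dist p.1 (x i) < ε := hsub i hp1
    have h2 : dist p.2 (x j) < ε := hsub j hp2
    calc dist (x i) (x j) ≤ dist (x i) p.1 + dist p.1 p.2 + dist p.2 (x j) :=
          dist_triangle4 _ _ _ _
      _ < ε + (ρ - 2 * ε) + ε := by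
          rw [dist_comm] at h1
          exact add_lt_add (add_lt_add h1 hpS) h2
      _ = ρ := by ring
  have hIU : IntegrableOn f (⋃ ij, T ij) ν := integrableOn_finite_iUnion.2 hint
  calc ∫ p in S, f p ∂(μ.prod μ) = ∫ p in ⋃ ij, T ij, f p ∂ν := by
        rw [hTunion, Measure.restrict_univ]
    _ = ∑' ij, ∫ p in T ij, f p ∂ν := integral_iUnion hTmeas hTdisj hIU
    _ = ∑ ij : Fin N × Fin N, ∫ p in T ij, f p ∂ν := tsum_fintype _
    _ = ∑ i, ∑ j, ∫ p in T (i, j), f p ∂ν := Fintype.sum_prod_type _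
    _ ≤ ∑ i, ∑ j, (if dist (x i) (x j) < ρ then
          (μ (V i)).toReal * (μ (V j)).toReal * (u i - u j) ^ 2 else 0) := by
        refine Finset.sum_le_sum fun i _ => Finset.sum_le_sum fun j _ => ?_
        rw [← setIntegral_congr_fun (hTmeas (i, j)) (hEq (i, j)), setIntegral_const,
          smul_eq_mul]
        by_cases hd : dist (x i) (x j) < ρ
        · rw [if_pos hd]
          have hle : (ν (T (i, j))).toReal ≤ (μ (V i)).toReal * (μ (V j)).toReal := by
            rw [← ENNReal.toReal_mul, ← Measure.prod_prod, hTν]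
            exact ENNReal.toReal_mono
              (by rw [Measure.prod_prod]; exact (ENNReal.mul_lt_top (hfin _) (hfin _)).ne)
              (measure_mono Set.inter_subset_left)
          exact mul_le_mul_of_nonneg_right hle (sq_nonneg _)
        · rw [if_neg hd]
          have hempty : T (i, j) ∩ S = ∅ := by
            by_contra h
            exact hd (hdistkey i j (Set.nonempty_iff_ne_empty.2 h))
          rw [measureReal_def, hTν, hempty]
          simp
end
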